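/- Suppose e0, e1, e2 are all nonzero. Then none of the polynomials (e0·X0 + e1·X1)², (e0·X0 + e2·X2)², (e1·X1 + e2·X2)² divides C; that is, every linear factor of C occurs with multiplicity exactly 1. -/
import Mathlib

open MvPolynomial

lemma coeff_one_eq_zero_of_sq_dvd {F : Type} [Field F] {f : Polynomial F}
    (hdvd : Polynomial.X ^ 2 ∣ f) : f.coeff 1 = 0 := by
  obtain ⟨g, rfl⟩ := hdvd
  rw [sq, mul_assoc, Polynomial.coeff_X_mul, Polynomial.mul_coeff_zero,
    Polynomial.coeff_X_zero, zero_mul]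

lemma key {F : Type} [Field F] {d : ℕ} (hd2 : 2 ≤ d) (hdF : (d : F) ≠ 0)
    {a : F} (ha : a ≠ 0) (u b : F) :
    ¬ Polynomial.X ^ 2 ∣ (Polynomial.C u + (Polynomial.X - Polynomial.C a) ^ d
      + (Polynomial.C b * Polynomial.X) ^ d) := by
  intro hdvd
  have hc := coeff_one_eq_zero_of_sq_dvd hdvd
  rw [Polynomial.coeff_add, Polynomial.coeff_add, Polynomial.coeff_C,
    sub_eq_add_neg, ← Polynomial.C_neg, Polynomial.coeff_X_add_C_pow,
    mul_pow, ← Polynomial.C_pow, Polynomial.coeff_C_mul, Polynomial.coeff_X_pow,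
    if_neg (by omega : ¬ (1 : ℕ) = d), if_neg (by norm_num)] at hc
  simp only [mul_zero, add_zero, zero_add, Nat.choose_one_right] at hc
  exact (mul_ne_zero (pow_ne_zero _ (neg_ne_zero.mpr ha)) hdF) hc

/-- The polynomial `C = X0^d + X1^d + X2^d + (e0·X0 + e1·X1 + e2·X2)^d` over `F_q`. -/
noncomputable def fermatSlice (F : Type) [Field F] (d : ℕ) (e0 e1 e2 : F) :
    MvPolynomial (Fin 3) F :=
  X 0 ^ d + X 1 ^ d + X 2 ^ d +
    (MvPolynomial.C e0 * X 0 + MvPolynomial.C e1 * X 1 + MvPolynomial.C e2 * X 2) ^ d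

/-- If `e0, e1, e2` are all nonzero, then none of
`(e0·X0 + e1·X1)²`, `(e0·X0 + e2·X2)²`, `(e1·X1 + e2·X2)²` divides `C`; that is,
every linear factor of `C` occurs with multiplicity exactly `1`. -/
theorem statement7 (p h : ℕ) (hp : Nat.Prime p) (hp3 : 3 < p) (hh : 0 < h)
    (F : Type) [Field F] [Fintype F] (hcard : Fintype.card F = p ^ h)
    (d : ℕ) (hd : p ^ h = 2 * d + 1) (e0 e1 e2 : F)
    (h0 : e0 ≠ 0) (h1 : e1 ≠ 0) (h2 : e2 ≠ 0) :
    ¬ ((MvPolynomial.C e0 * X 0 + MvPolynomial.C e1 * X 1) ^ 2 ∣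
        fermatSlice F d e0 e1 e2) ∧
    ¬ ((MvPolynomial.C e0 * X 0 + MvPolynomial.C e2 * X 2) ^ 2 ∣
        fermatSlice F d e0 e1 e2) ∧
    ¬ ((MvPolynomial.C e1 * X 1 + MvPolynomial.C e2 * X 2) ^ 2 ∣
        fermatSlice F d e0 e1 e2) := by
  have hd2 : 2 ≤ d := by
    have h5 : 4 ≤ p ^ h := le_trans (by omega : 4 ≤ p) (Nat.le_self_pow hh.ne' p)
    omega
  haveI : CharP F p := by
    haveI := ringChar.charP F
    have hrp : (ringChar F).Prime := CharP.char_is_prime F (ringChar F)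
    have hdvd : ringChar F ∣ p ^ h := by
      rw [← hcard]
      exact (CharP.cast_eq_zero_iff F (ringChar F) (Fintype.card F)).mp
        (FiniteField.cast_card_eq_zero F)
    have heq : ringChar F = p :=
      (Nat.prime_dvd_prime_iff_eq hrp hp).mp (hrp.dvd_of_dvd_pow hdvd)
    exact heq ▸ ringChar.charP F
  have hdF : (d : F) ≠ 0 := by
    rw [Ne, CharP.cast_eq_zero_iff F p]
    intro hpd
    have h1' : p ∣ 2 * d + 1 := hd ▸ dvd_pow_self p hh.ne'
    have h2' : p ∣ 2 * d := Dvd.dvd.mul_left hpd 2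
    have h3' : p ∣ 1 := (Nat.dvd_add_right h2').mp h1'
    have := Nat.le_of_dvd one_pos h3'
    omega
  refine ⟨?_, ?_, ?_⟩
  · intro hdvd
    have hmap := map_dvd (aeval (![Polynomial.C e1, Polynomial.X - Polynomial.C e0, 0] :
      Fin 3 → Polynomial F)) hdvd
    simp only [map_pow, map_add, map_mul, aeval_X, aeval_C, fermatSlice,
      Matrix.cons_val_zero, Matrix.cons_val_one, Matrix.head_cons,
      Matrix.cons_val_two, Matrix.tail_cons, Polynomial.algebraMap_eq] at hmap
    have heq : Polynomial.C e0 * Polynomial.C e1 + Polynomial.C e1 *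
        (Polynomial.X - Polynomial.C e0) = Polynomial.C e1 * Polynomial.X := by ring
    rw [heq] at hmap
    refine key hd2 hdF h0 (e1 ^ d) e1 ?_
    refine dvd_trans (pow_dvd_pow_of_dvd (dvd_mul_left _ _) 2) (dvd_trans hmap (dvd_of_eq ?_))
    rw [zero_pow (by omega : d ≠ 0)]
    ring_nf
    rw [← Polynomial.C_pow]
    ring
  · intro hdvd
    have hmap := map_dvd (aeval (![Polynomial.C e2, 0, Polynomial.X - Polynomial.C e0] :
      Fin 3 → Polynomial F)) hdvd
    simp only [map_pow, map_add, map_mul, aeval_X, aeval_C, fermatSlice,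
      Matrix.cons_val_zero, Matrix.cons_val_one, Matrix.head_cons,
      Matrix.cons_val_two, Matrix.tail_cons, Polynomial.algebraMap_eq, mul_zero,
      add_zero, zero_add] at hmap
    have heq : Polynomial.C e0 * Polynomial.C e2 + Polynomial.C e2 *
        (Polynomial.X - Polynomial.C e0) = Polynomial.C e2 * Polynomial.X := by ring
    rw [heq] at hmap
    refine key hd2 hdF h0 (e2 ^ d) e2 ?_
    refine dvd_trans (pow_dvd_pow_of_dvd (dvd_mul_left _ _) 2) (dvd_trans hmap (dvd_of_eq ?_))
    rw [zero_pow (by omega : d ≠ 0)]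
    ring_nf
    rw [← Polynomial.C_pow]
    ring
  · intro hdvd
    have hmap := map_dvd (aeval (![0, Polynomial.C e2, Polynomial.X - Polynomial.C e1] :
      Fin 3 → Polynomial F)) hdvd
    simp only [map_pow, map_add, map_mul, aeval_X, aeval_C, fermatSlice,
      Matrix.cons_val_zero, Matrix.cons_val_one, Matrix.head_cons,
      Matrix.cons_val_two, Matrix.tail_cons, Polynomial.algebraMap_eq, mul_zero,
      add_zero, zero_add] at hmap
    have heq : Polynomial.C e1 * Polynomial.C e2 + Polynomial.C e2 *
        (Polynomial.X - Polynomial.C e1) = Polynomial.C e2 * Polynomial.X := by ring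
    rw [heq] at hmap
    refine key hd2 hdF h1 (e2 ^ d) e2 ?_
    refine dvd_trans (pow_dvd_pow_of_dvd (dvd_mul_left _ _) 2) (dvd_trans hmap (dvd_of_eq ?_))
    rw [zero_pow (by omega : d ≠ 0)]
    ring_nf
    rw [← Polynomial.C_pow]
    ring
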